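/- arXiv:2309.02621 — 5 statements merged into one kernel-verified Lean document; each statement's English description precedes it below -/
import Mathlib

section
/- Let p01, p11, p00, p10 be positive reals summing to 1, with odds ratio OR = (p11/p10)·(p00/p01) and relative risk RR = (p11/(p11+p10))·((p01+p00)/p01). Then OR/RR = 1 − p01/(p00+p01) + (p01/(p00+p01))·OR; equivalently RR = OR/(1 − p01/(p01+p00) + (p01/(p01+p00))·OR). -/
theorem stmt2 (p01 p11 p00 p10 : ℝ)
    (h01 : 0 < p01) (h11 : 0 < p11) (h00 : 0 < p00) (h10 : 0 < p10)
    (hsum : p01 + p11 + p00 + p10 = 1)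
    (OR RR : ℝ)
    (hOR : OR = (p11 / p10) * (p00 / p01))
    (hRR : RR = (p11 / (p11 + p10)) * ((p01 + p00) / p01)) :
    OR / RR = 1 - p01 / (p00 + p01) + (p01 / (p00 + p01)) * OR ∧
    RR = OR / (1 - p01 / (p01 + p00) + (p01 / (p01 + p00)) * OR) := by
  have hRRpos : 0 < RR := by
    rw [hRR]; positivity
  have h1 : OR / RR = 1 - p01 / (p00 + p01) + (p01 / (p00 + p01)) * OR := by
    rw [hOR, hRR]
    field_simp
    ring
  refine ⟨h1, ?_⟩
  have hden : 1 - p01 / (p01 + p00) + (p01 / (p01 + p00)) * OR = OR / RR := by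
    rw [h1]; ring_nf
  rw [hden]
  have hORpos : 0 < OR := by rw [hOR]; positivity
  rw [div_div_eq_mul_div, mul_comm, mul_div_assoc, div_self (ne_of_gt hORpos), mul_one]
end

section
/- Let p01, p11, p00, p10 be positive reals summing to 1, p_e = p11 + p10, p_d = p01 + p11, RR the relative risk and OR the odds ratio. Then RR satisfies the quadratic equation p_e·RR² + (p_d(OR−1) + (1−p_e) − p_e·OR)·RR − (1−p_e)·OR = 0. -/
theorem stmt3 (p01 p11 p00 p10 : ℝ)
    (h01 : 0 < p01) (h11 : 0 < p11) (h00 : 0 < p00) (h10 : 0 < p10)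
    (hsum : p01 + p11 + p00 + p10 = 1)
    (pe pd RR OR : ℝ)
    (hpe : pe = p11 + p10) (hpd : pd = p01 + p11)
    (hRR : RR = (p11 / (p11 + p10)) * ((p01 + p00) / p01))
    (hOR : OR = (p11 * p00) / (p10 * p01)) :
    pe * RR ^ 2 + (pd * (OR - 1) + (1 - pe) - pe * OR) * RR - (1 - pe) * OR = 0 := by
  subst hpe hpd hRR hOR
  have h : p00 = 1 - p01 - p11 - p10 := by linarith
  subst h
  have h1 : p11 + p10 ≠ 0 := by positivity
  field_simp
  ring
end

section
/- Let ψ₁,…,ψₙ ∈ [0,1] with mean ψ̄ ∈ (0,1), variance σ² = (1/n)∑(ψᵢ−ψ̄)², L = (1/n)∑(ψᵢ² + (1−ψᵢ)²), and R² = σ²/(ψ̄(1−ψ̄)). Let C, D̃, U be twin-pair counts summing to n with BC = 2C/(2C+D̃), ψ̄ = (C+D̃/2)/n, and V = (U+C)/n. If L ≤ V, then R² ≤ 1 − (1−BC)/(1−ψ̄). -/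
theorem stmt10 (n : ℕ) (hn : 0 < n) (ψ : Fin n → ℝ)
    (hψ : ∀ i, ψ i ∈ Set.Icc (0 : ℝ) 1)
    (ψbar σ2 L R2 : ℝ)
    (hψbar : ψbar = (∑ i, ψ i) / n)
    (hψbar0 : 0 < ψbar) (hψbar1 : ψbar < 1)
    (hσ2 : σ2 = (∑ i, (ψ i - ψbar) ^ 2) / n)
    (hL : L = (∑ i, (ψ i ^ 2 + (1 - ψ i) ^ 2)) / n)
    (hR2 : R2 = σ2 / (ψbar * (1 - ψbar)))
    (C D U : ℕ) (hsum : C + D + U = n) (h2CD : 0 < 2 * C + D)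
    (BC V : ℝ)
    (hBC : BC = (2 * C : ℝ) / (2 * C + D))
    (hψC : ψbar = ((C : ℝ) + (D : ℝ) / 2) / n)
    (hV : V = ((U : ℝ) + C) / n)
    (hLV : L ≤ V) :
    R2 ≤ 1 - (1 - BC) / (1 - ψbar) := by
  have npos : (0:ℝ) < n := by exact_mod_cast hn
  have nn : (n:ℝ) ≠ 0 := ne_of_gt npos
  have hd : 0 < ψbar * (1 - ψbar) := mul_pos hψbar0 (by linarith)
  have hsum' : (C:ℝ) + D + U = n := by exact_mod_cast hsum
  have h2CD' : (0:ℝ) < 2*C + D := by exact_mod_cast h2CD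
  have hSψ : ∑ i, ψ i = n * ψbar := by rw [hψbar]; field_simp
  -- expand L sum
  have hexp : ∑ i, (ψ i ^ 2 + (1 - ψ i) ^ 2)
      = 2 * (∑ i, ψ i ^ 2) - 2 * (∑ i, ψ i) + n := by
    have : ∀ i ∈ Finset.univ, ψ i ^ 2 + (1 - ψ i) ^ 2
        = 2 * ψ i ^ 2 - 2 * ψ i + 1 := fun i _ => by ring
    rw [Finset.sum_congr rfl this]
    simp [Finset.sum_add_distrib, Finset.sum_sub_distrib, Finset.mul_sum]
  -- expand σ2 sum
  have hvar : ∑ i, (ψ i - ψbar) ^ 2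
      = (∑ i, ψ i ^ 2) - 2 * ψbar * (∑ i, ψ i) + n * ψbar ^ 2 := by
    have : ∀ i ∈ Finset.univ, (ψ i - ψbar) ^ 2
        = ψ i ^ 2 - 2 * ψbar * ψ i + ψbar ^ 2 := fun i _ => by ring
    rw [Finset.sum_congr rfl this]
    simp [Finset.sum_add_distrib, Finset.sum_sub_distrib, Finset.mul_sum]
  have hσn : σ2 * n = (∑ i, ψ i ^ 2) - n * ψbar ^ 2 := by
    rw [hσ2, hvar, hSψ]; field_simp; ring
  have hLn : L * n = 2 * (∑ i, ψ i ^ 2) - 2 * (n * ψbar) + n := by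
    rw [hL, hexp, hSψ]; field_simp
  have hVn : V * n = (U:ℝ) + C := by rw [hV]; field_simp
  have hLVn : L * n ≤ V * n := mul_le_mul_of_nonneg_right hLV npos.le
  have hS2 : 2 * (∑ i, ψ i ^ 2) ≤ 2 * (n * ψbar) - D := by
    rw [hLn, hVn] at hLVn; linarith
  have key : σ2 ≤ ψbar * (1 - ψbar) - (D:ℝ) / (2*n) := by
    have h1 : σ2 * n ≤ n * ψbar - (D:ℝ)/2 - n * ψbar ^ 2 := by
      rw [hσn]; linarith
    rw [← sub_nonneg]
    have h3 : 0 ≤ (ψbar * (1 - ψbar) - (D:ℝ) / (2*n) - σ2) * n := by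
      have e : (ψbar * (1 - ψbar) - (D:ℝ) / (2*n) - σ2) * n
          = (n * ψbar - (D:ℝ)/2 - n * ψbar ^ 2) - σ2 * n := by
        field_simp; ring
      rw [e]; linarith
    exact nonneg_of_mul_nonneg_right (by linarith [h3]) npos
  have hnψ : (n:ℝ) * ψbar = C + D/2 := by rw [hψC]; field_simp
  have h1ψ : (1:ℝ) - ψbar ≠ 0 := by linarith
  have hBCψ : (1 - BC) * ψbar = (D:ℝ) / (2*n) := by
    rw [hBC]
    field_simp
    linear_combination (D:ℝ) * 2 * hnψ
  rw [hR2, div_le_iff₀ hd]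
  have hrhs : (1 - (1 - BC) / (1 - ψbar)) * (ψbar * (1 - ψbar))
      = ψbar * (1 - ψbar) - (1 - BC) * ψbar := by
    field_simp
  rw [hrhs, hBCψ]
  exact key
end

section
/- Let ψ₁,…,ψₙ ∈ [0,1] with mean ψ̄ ∈ (0,1), L = (1/n)∑(ψᵢ² + (1−ψᵢ)²), variance σ², and R² = σ²/(ψ̄(1−ψ̄)). Let C, D̃, U be twin-pair counts summing to n with PC = C/(C+D̃) (C+D̃ > 0), ψ̄ = (C+D̃/2)/n, and V = (U+C)/n. If L ≤ V, then R² ≤ 1 − (1/(1−ψ̄))·(1−PC)/(1+PC). -/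
theorem stmt11 (n : ℕ) (hn : 0 < n) (ψ : Fin n → ℝ)
    (hψ : ∀ i, ψ i ∈ Set.Icc (0 : ℝ) 1)
    (ψbar σ2 L R2 : ℝ)
    (hψbar : ψbar = (∑ i, ψ i) / n)
    (hψbar0 : 0 < ψbar) (hψbar1 : ψbar < 1)
    (hσ2 : σ2 = (∑ i, (ψ i - ψbar) ^ 2) / n)
    (hL : L = (∑ i, (ψ i ^ 2 + (1 - ψ i) ^ 2)) / n)
    (hR2 : R2 = σ2 / (ψbar * (1 - ψbar)))
    (C D U : ℕ) (hsum : C + D + U = n) (hCD : 0 < C + D)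
    (PC V : ℝ)
    (hPC : PC = (C : ℝ) / (C + D))
    (hψC : ψbar = ((C : ℝ) + (D : ℝ) / 2) / n)
    (hV : V = ((U : ℝ) + C) / n)
    (hLV : L ≤ V) :
    R2 ≤ 1 - (1 / (1 - ψbar)) * ((1 - PC) / (1 + PC)) := by
  have hn' : (0:ℝ) < n := by exact_mod_cast hn
  have hCD' : (0:ℝ) < (C:ℝ) + D := by exact_mod_cast hCD
  have hU : (U:ℝ) = n - C - D := by
    have : ((C + D + U : ℕ) : ℝ) = n := by exact_mod_cast congrArg (Nat.cast : ℕ → ℝ) hsum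
    push_cast at this; linarith
  have hS : (∑ i, ψ i) = n * ψbar := by
    rw [hψbar]; field_simp
  have hnψ : (n:ℝ) * ψbar = (C:ℝ) + (D:ℝ)/2 := by
    rw [hψC]; field_simp
  -- sum expansions
  have e1 : (∑ i, (ψ i - ψbar) ^ 2)
      = (∑ i, ψ i ^ 2) - (2*ψbar) * (∑ i, ψ i) + n * ψbar^2 := by
    have h : ∀ i ∈ Finset.univ, (ψ i - ψbar) ^ 2
        = ψ i ^ 2 - (2*ψbar) * ψ i + ψbar^2 := fun i _ => by ring
    rw [Finset.sum_congr rfl h, Finset.sum_add_distrib, Finset.sum_sub_distrib,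
      ← Finset.mul_sum, Finset.sum_const, Finset.card_univ, Fintype.card_fin,
      nsmul_eq_mul]
  have e2 : (∑ i, (ψ i ^ 2 + (1 - ψ i) ^ 2))
      = 2 * (∑ i, ψ i ^ 2) - 2 * (∑ i, ψ i) + n := by
    have h : ∀ i ∈ Finset.univ, (ψ i ^ 2 + (1 - ψ i) ^ 2)
        = 2 * ψ i ^ 2 - 2 * ψ i + 1 := fun i _ => by ring
    rw [Finset.sum_congr rfl h, Finset.sum_add_distrib, Finset.sum_sub_distrib,
      Finset.mul_sum, Finset.mul_sum, Finset.sum_const, Finset.card_univ,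
      Fintype.card_fin, nsmul_eq_mul, mul_one]
  set Q := (∑ i, ψ i ^ 2) with hQ
  -- key bound on Q from L ≤ V
  have hQle : Q ≤ (n:ℝ) * ψbar - (D:ℝ)/2 := by
    have hVeq : V = ((n:ℝ) - D) / n := by rw [hV, hU]; ring_nf
    have hLeq : L = (2*Q - 2*((n:ℝ)*ψbar) + n) / n := by
      rw [hL, e2, hS]
    rw [hLeq, hVeq] at hLV
    have := (div_le_div_iff₀ hn' hn').mp hLV
    nlinarith
  -- σ2 bound
  have hσle : σ2 ≤ ψbar * (1 - ψbar) - (D:ℝ)/(2*n) := by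
    have hσeq : σ2 = Q / n - ψbar^2 := by
      rw [hσ2, e1, hS]; field_simp; ring
    have h1 : Q / n ≤ ((n:ℝ) * ψbar - (D:ℝ)/2) / n := by gcongr
    have h2 : ((n:ℝ) * ψbar - (D:ℝ)/2) / n = ψbar - (D:ℝ)/(2*n) := by
      field_simp
    rw [h2] at h1
    rw [hσeq]
    nlinarith
  -- rewrite RHS
  have hPCeq : (1 - PC) / (1 + PC) = (D:ℝ) / (2*C + D) := by
    rw [hPC]
    have h1 : (0:ℝ) < 1 + (C:ℝ)/(C+D) := by positivity
    have h2 : (0:ℝ) < 2*(C:ℝ) + D := by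
      have : (0:ℝ) ≤ (C:ℝ) := by positivity
      linarith
    rw [div_eq_div_iff h1.ne' h2.ne']
    have hc : ((C:ℝ)+D) ≠ 0 := hCD'.ne'
    field_simp
    ring_nf
  have h2CD : (2*(C:ℝ) + D) = 2 * ((n:ℝ) * ψbar) := by rw [hnψ]; ring
  rw [hR2, hPCeq, h2CD]
  have hpos : (0:ℝ) < ψbar * (1 - ψbar) := mul_pos hψbar0 (by linarith)
  rw [div_le_iff₀ hpos]
  have hrhs : (1 - 1/(1-ψbar) * ((D:ℝ) / (2 * ((n:ℝ)*ψbar)))) * (ψbar * (1-ψbar))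
      = ψbar * (1 - ψbar) - (D:ℝ)/(2*n) := by
    have ha : (1 - ψbar) ≠ 0 := ne_of_gt (by linarith)
    have hb : ψbar ≠ 0 := hψbar0.ne'
    field_simp [ha, hb, hn'.ne']
  rw [hrhs]
  exact hσle
end

section
/- Let π₁,…,πₙ, r₁,…,rₙ ∈ [0,1]. Define the four cell probabilities qᵢ = (πᵢrᵢ, πᵢ(1−rᵢ), (1−πᵢ)rᵢ, (1−πᵢ)(1−rᵢ)) for each i, let Σ_μ = ∑ᵢ (diag(qᵢ) − qᵢqᵢᵀ) be the covariance matrix of the sum of independent categorical variables with probabilities qᵢ, and let Σ_p = n(diag(q̄) − q̄q̄ᵀ) with q̄ = (1/n)∑ᵢ qᵢ be the covariance of the corresponding multinomial. Then Σ_p − Σ_μ is positive semidefinite. -/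
/-!
Writing `C(p) = diag p - p pᵀ` for the covariance of a categorical variable with probabilities
`p`, the difference is an exact law-of-total-variance decomposition: since `C` is affine in `p`
apart from the term `- p pᵀ`, `n C(q̄) - ∑ᵢ C(qᵢ) = ∑ᵢ qᵢ qᵢᵀ - n q̄ q̄ᵀ = ∑ᵢ (qᵢ - q̄)(qᵢ - q̄)ᵀ`,
a sum of rank-one positive semidefinite matrices.
-/

open Matrix

namespace Matrix

variable {ι m R M : Type*} [Fintype ι] [DecidableEq m]

def categoricalCov [CommRing R] (p : m → R) : Matrix m m R :=
  diagonal p - vecMulVec p p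

theorem card_smul_categoricalCov_sub_sum_categoricalCov [CommRing R] (v : ι → m → R)
    (a : m → R) (hsum : ∑ i, v i = (Fintype.card ι : R) • a) :
    (Fintype.card ι : R) • categoricalCov a - ∑ i, categoricalCov (v i) =
      ∑ i, vecMulVec (v i - a) (v i - a) := by
  have hsum' : ∀ j, ∑ i, v i j = Fintype.card ι * a j := fun j => by
    simpa using congrFun hsum j
  ext j k
  simp only [categoricalCov, sub_apply, smul_apply, sum_apply, vecMulVec_apply, Pi.sub_apply,
    smul_eq_mul, Finset.sum_sub_distrib]
  have hcross : ∑ i, (v i j - a j) * (v i k - a k) =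
      ∑ i, v i j * v i k - Fintype.card ι * a j * a k := by
    simp only [sub_mul, mul_sub, Finset.sum_sub_distrib, ← Finset.sum_mul, ← Finset.mul_sum,
      hsum', Finset.sum_const, Finset.card_univ, nsmul_eq_mul]
    ring
  rw [hcross]
  by_cases hjk : j = k
  · subst hjk
    simp only [diagonal_apply_eq, hsum']
    ring
  · simp only [diagonal_apply_ne _ hjk, Finset.sum_const_zero]
    ring

theorem card_smul_inv_smul_sum [DivisionRing R] [CharZero R] [AddCommGroup M] [Module R M]
    (v : ι → M) :
    (Fintype.card ι : R) • ((Fintype.card ι : R)⁻¹ • ∑ i, v i) = ∑ i, v i := by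
  rcases isEmpty_or_nonempty ι with _ | _
  · simp
  · exact smul_inv_smul₀ (Nat.cast_ne_zero.mpr Fintype.card_ne_zero) _

theorem posSemidef_card_smul_categoricalCov_mean_sub_sum [Fintype m] (v : ι → m → ℝ) :
    ((Fintype.card ι : ℝ) • categoricalCov ((Fintype.card ι : ℝ)⁻¹ • ∑ i, v i) -
      ∑ i, categoricalCov (v i)).PosSemidef := by
  rw [card_smul_categoricalCov_sub_sum_categoricalCov v _ (card_smul_inv_smul_sum v).symm]
  exact posSemidef_sum _ fun i _ => posSemidef_vecMulVec_self_star (v i - _)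

end Matrix

theorem stmt16_general (n : ℕ) (q : Fin n → Fin 4 → ℝ)
    (qbar : Fin 4 → ℝ) (hqbar : qbar = (n : ℝ)⁻¹ • ∑ i, q i)
    (Sμ Sp : Matrix (Fin 4) (Fin 4) ℝ)
    (hSμ : Sμ = ∑ i, (Matrix.diagonal (q i) - vecMulVec (q i) (q i)))
    (hSp : Sp = (n : ℝ) • (Matrix.diagonal qbar - vecMulVec qbar qbar)) :
    (Sp - Sμ).PosSemidef := by
  subst hqbar hSμ hSp
  simpa only [Fintype.card_fin, categoricalCov] using posSemidef_card_smul_categoricalCov_mean_sub_sum q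

theorem stmt16 (n : ℕ) (hn : 0 < n) (π r : Fin n → ℝ)
    (hπ : ∀ i, π i ∈ Set.Icc (0 : ℝ) 1) (hr : ∀ i, r i ∈ Set.Icc (0 : ℝ) 1)
    (q : Fin n → Fin 4 → ℝ)
    (hq : ∀ i, q i = ![π i * r i, π i * (1 - r i), (1 - π i) * r i, (1 - π i) * (1 - r i)])
    (qbar : Fin 4 → ℝ) (hqbar : qbar = (n : ℝ)⁻¹ • ∑ i, q i)
    (Sμ Sp : Matrix (Fin 4) (Fin 4) ℝ)
    (hSμ : Sμ = ∑ i, (Matrix.diagonal (q i) - vecMulVec (q i) (q i)))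
    (hSp : Sp = (n : ℝ) • (Matrix.diagonal qbar - vecMulVec qbar qbar)) :
    (Sp - Sμ).PosSemidef :=
  stmt16_general n q qbar hqbar Sμ Sp hSμ hSp
end
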